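/- There exists a unique x₀ ∈ [0, 1] such that h(x₀) = (π/8)(x₀ + 1), where h(x) = x ∫₀^{π/2} cos²t / (1 − x² sin²t)^{1/2} dt; moreover x₀ ∈ (0, 1). -/
import Mathlib

open Real Set MeasureTheory intervalIntegral

/-- The real Haagerup function. -/
noncomputable def haagerupReal (x : ℝ) : ℝ :=
  x * ∫ t in (0:ℝ)..(π / 2), Real.cos t ^ 2 / Real.sqrt (1 - x ^ 2 * Real.sin t ^ 2)

noncomputable def hg (x t : ℝ) : ℝ := Real.cos t ^ 2 / Real.sqrt (1 - x ^ 2 * Real.sin t ^ 2)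

lemma hg_bounds {x t : ℝ} (hx : x ∈ Icc (0:ℝ) 1) (ht : t ∈ Icc (0:ℝ) (π/2)) :
    Real.cos t ^ 2 ≤ hg x t ∧ hg x t ≤ Real.cos t := by
  have hc : 0 ≤ Real.cos t := Real.cos_nonneg_of_mem_Icc ⟨by linarith [ht.1, pi_pos], ht.2⟩
  have hs : Real.sin t ^ 2 ≤ 1 := sin_sq_le_one t
  have hx2 : x ^ 2 ≤ 1 := by nlinarith [hx.1, hx.2]
  have h1 : Real.cos t ^ 2 ≤ 1 - x ^ 2 * Real.sin t ^ 2 := by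
    have := Real.sin_sq_add_cos_sq t
    nlinarith [sq_nonneg (Real.sin t), hx.1]
  have h2 : 1 - x ^ 2 * Real.sin t ^ 2 ≤ 1 := by nlinarith [sq_nonneg (Real.sin t), sq_nonneg x]
  have hsq : Real.cos t ≤ Real.sqrt (1 - x ^ 2 * Real.sin t ^ 2) := by
    calc Real.cos t = Real.sqrt (Real.cos t ^ 2) := by rw [Real.sqrt_sq hc]
    _ ≤ _ := Real.sqrt_le_sqrt h1
  have hsq1 : Real.sqrt (1 - x ^ 2 * Real.sin t ^ 2) ≤ 1 := by
    simpa using Real.sqrt_le_sqrt h2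
  constructor
  · rcases eq_or_lt_of_le (Real.sqrt_nonneg (1 - x ^ 2 * Real.sin t ^ 2)) with h | h
    · have hc0 : Real.cos t = 0 := le_antisymm (by rw [← h] at hsq; exact hsq) hc
      simp [hg, hc0]
    · calc Real.cos t ^ 2 = Real.cos t ^ 2 / 1 := by ring
      _ ≤ hg x t := by unfold hg; gcongr
  · rcases eq_or_lt_of_le hc with h | h
    · simp [hg, ← h]
    · calc hg x t ≤ Real.cos t ^ 2 / Real.cos t := by
            unfold hg; gcongr
        _ = Real.cos t := by rw [sq, mul_div_assoc, div_self h.ne', mul_one]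

lemma hg_nonneg (x t : ℝ) : 0 ≤ hg x t :=
  div_nonneg (sq_nonneg _) (Real.sqrt_nonneg _)

lemma hg_mono {x y t : ℝ} (hx : 0 ≤ x) (hxy : x ≤ y) (hy : y ≤ 1)
    (ht : t ∈ Icc (0:ℝ) (π/2)) : hg x t ≤ hg y t := by
  have hc : 0 ≤ Real.cos t := Real.cos_nonneg_of_mem_Icc ⟨by linarith [ht.1, pi_pos], ht.2⟩
  have hsle : Real.sin t ^ 2 ≤ 1 := sin_sq_le_one t
  have hy0 : 0 ≤ y := le_trans hx hxy
  have hy2 : y ^ 2 ≤ 1 := by nlinarith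
  have hxy2 : x ^ 2 ≤ y ^ 2 := by nlinarith
  have h1 : Real.cos t ^ 2 ≤ 1 - y ^ 2 * Real.sin t ^ 2 := by
    have := Real.sin_sq_add_cos_sq t
    nlinarith [sq_nonneg (Real.sin t)]
  have h12 : 1 - y ^ 2 * Real.sin t ^ 2 ≤ 1 - x ^ 2 * Real.sin t ^ 2 := by
    nlinarith [sq_nonneg (Real.sin t)]
  rcases eq_or_lt_of_le (le_trans (sq_nonneg (Real.cos t)) h1) with h | h
  · -- 1 - y² sin² = 0, so cos t = 0, both sides 0
    have hc0 : Real.cos t ^ 2 = 0 := le_antisymm (h ▸ h1) (sq_nonneg _)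
    simp [hg, hc0]
  · have hsq : 0 < Real.sqrt (1 - y ^ 2 * Real.sin t ^ 2) := Real.sqrt_pos.2 h
    unfold hg
    gcongr

lemma hg_meas (x : ℝ) : Measurable (hg x) := by
  unfold hg; fun_prop

lemma hg_intervalIntegrable {x : ℝ} (hx : x ∈ Icc (0:ℝ) 1) :
    IntervalIntegrable (hg x) volume 0 (π/2) := by
  have hpi : (0:ℝ) ≤ π/2 := by positivity
  rw [intervalIntegrable_iff_integrableOn_Ioc_of_le hpi]
  apply Integrable.mono' (g := Real.cos)
  · exact (Real.continuous_cos.integrableOn_Ioc)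
  · exact (hg_meas x).aestronglyMeasurable.restrict
  · filter_upwards [ae_restrict_mem measurableSet_Ioc] with t ht
    rw [Real.norm_eq_abs, abs_of_nonneg (hg_nonneg x t)]
    exact (hg_bounds hx (Ioc_subset_Icc_self ht)).2

noncomputable def Fh (x : ℝ) : ℝ := ∫ t in (0:ℝ)..(π/2), hg x t

lemma Fh_mono {x y : ℝ} (hx : 0 ≤ x) (hxy : x ≤ y) (hy : y ≤ 1) : Fh x ≤ Fh y :=
  intervalIntegral.integral_mono_on (by positivity)
    (hg_intervalIntegrable ⟨hx, le_trans hxy hy⟩) (hg_intervalIntegrable ⟨le_trans hx hxy, hy⟩)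
    (fun t ht => hg_mono hx hxy hy ht)

lemma Fh_ge {x : ℝ} (hx : x ∈ Icc (0:ℝ) 1) : π/4 ≤ Fh x := by
  have h1 : (∫ t in (0:ℝ)..(π/2), Real.cos t ^ 2) ≤ Fh x :=
    intervalIntegral.integral_mono_on (by positivity)
      (by apply Continuous.intervalIntegrable; fun_prop)
      (hg_intervalIntegrable hx) (fun t ht => (hg_bounds hx ht).1)
  rw [integral_cos_sq] at h1
  simp [Real.cos_pi_div_two] at h1
  linarith

lemma Fh_one : Fh 1 = 1 := by
  have h : EqOn (hg 1) Real.cos (uIcc (0:ℝ) (π/2)) := by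
    intro t ht
    rw [uIcc_of_le (by positivity)] at ht
    have hc : 0 ≤ Real.cos t := Real.cos_nonneg_of_mem_Icc ⟨by linarith [ht.1, pi_pos], ht.2⟩
    have hs : 1 - 1 ^ 2 * Real.sin t ^ 2 = Real.cos t ^ 2 := by
      have := Real.sin_sq_add_cos_sq t; linarith
    unfold hg
    rw [hs, Real.sqrt_sq hc]
    rcases eq_or_lt_of_le hc with h0 | h0
    · simp [← h0]
    · rw [sq, mul_div_assoc, div_self h0.ne', mul_one]
  rw [Fh, intervalIntegral.integral_congr h, integral_cos]
  simp

lemma Fh_continuousOn : ContinuousOn Fh (Icc (0:ℝ) 1) := by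
  intro x₀ hx₀
  apply intervalIntegral.continuousWithinAt_of_dominated_interval
    (bound := Real.cos)
  · filter_upwards with x
    exact (hg_meas x).aestronglyMeasurable.restrict
  · filter_upwards [self_mem_nhdsWithin] with x hx
    filter_upwards with t ht
    rw [uIoc_of_le (by positivity : (0:ℝ) ≤ π/2)] at ht
    rw [Real.norm_eq_abs, abs_of_nonneg (hg_nonneg x t)]
    exact (hg_bounds hx (Ioc_subset_Icc_self ht)).2
  · exact Real.continuous_cos.intervalIntegrable _ _
  · filter_upwards with t ht
    rw [uIoc_of_le (by positivity : (0:ℝ) ≤ π/2)] at ht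
    have ht' := Ioc_subset_Icc_self ht
    rcases eq_or_lt_of_le ht'.2 with he | hlt
    · -- t = π/2 : function is constantly 0
      have : (fun x => hg x t) = fun _ => 0 := by
        funext x
        have : Real.cos t = 0 := by rw [he, Real.cos_pi_div_two]
        simp [hg, this]
      rw [this]
      exact continuousWithinAt_const
    · -- t < π/2 : denominator positive at x₀
      have hc : 0 < Real.cos t := Real.cos_pos_of_mem_Ioo
        ⟨by linarith [ht'.1, pi_pos], hlt⟩
      have hd : 0 < 1 - x₀ ^ 2 * Real.sin t ^ 2 := by
        have h1 : x₀ ^ 2 ≤ 1 := by nlinarith [hx₀.1, hx₀.2]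
        have := Real.sin_sq_add_cos_sq t
        nlinarith [sq_nonneg (Real.sin t), sq_nonneg (Real.cos t)]
      apply ContinuousAt.continuousWithinAt
      apply ContinuousAt.div continuousAt_const
      · exact (Real.continuous_sqrt.comp (by fun_prop)).continuousAt
      · exact (Real.sqrt_pos.2 hd).ne'

lemma haagerup_eq (x : ℝ) : haagerupReal x = x * Fh x := rfl

lemma strictG {x y : ℝ} (hx : x ∈ Icc (0:ℝ) 1) (hy : y ∈ Icc (0:ℝ) 1) (hxy : x < y) :
    haagerupReal x - π/8*(x+1) < haagerupReal y - π/8*(y+1) := by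
  rw [haagerup_eq, haagerup_eq]
  have h1 : y * Fh x ≤ y * Fh y := mul_le_mul_of_nonneg_left (Fh_mono hx.1 hxy.le hy.2) hy.1
  have h2 : π/4 ≤ Fh x := Fh_ge hx
  nlinarith [pi_pos]

theorem exists_unique_haagerup_fixed_point :
    ∃ x₀ ∈ Set.Ioo (0 : ℝ) 1,
      haagerupReal x₀ = π / 8 * (x₀ + 1) ∧
      ∀ x ∈ Set.Icc (0 : ℝ) 1, haagerupReal x = π / 8 * (x + 1) → x = x₀ := by
  set G : ℝ → ℝ := fun x => haagerupReal x - π/8*(x+1) with hG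
  have hcont : ContinuousOn G (Icc (0:ℝ) 1) := by
    simp only [hG, haagerup_eq]
    exact (continuousOn_id.mul Fh_continuousOn).sub (Continuous.continuousOn (by fun_prop))
  have h0 : G 0 < 0 := by
    simp only [hG, haagerup_eq, zero_mul]
    nlinarith [pi_pos]
  have h1 : (0:ℝ) < G 1 := by
    simp only [hG, haagerup_eq, Fh_one]
    nlinarith [pi_lt_d2]
  obtain ⟨x₀, hx₀, hfx₀⟩ := intermediate_value_Ioo (by norm_num : (0:ℝ) ≤ 1) hcont ⟨h0, h1⟩
  have hx₀' : x₀ ∈ Icc (0:ℝ) 1 := Ioo_subset_Icc_self hx₀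
  have heq₀ : haagerupReal x₀ = π / 8 * (x₀ + 1) := by
    have : haagerupReal x₀ - π/8*(x₀+1) = 0 := hfx₀
    linarith
  refine ⟨x₀, hx₀, heq₀, ?_⟩
  intro x hx hxeq
  rcases lt_trichotomy x x₀ with h | h | h
  · exfalso
    have := strictG hx hx₀' h
    rw [hxeq, heq₀] at this
    linarith
  · exact h
  · exfalso
    have := strictG hx₀' hx h
    rw [hxeq, heq₀] at this
    linarith
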